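/- arXiv:2201.00268 — 2 statements merged into one kernel-verified Lean document; each statement's English description precedes it below -/
import Mathlib

section
/- If f = (f₁, f₂, …) belongs to X(T,E^ℕ), then the vector space Span{f_n : n ∈ ℕ} is contained in X(T,E) ∪ {0}; that is, every finite linear combination a₁f₁ + ⋯ + a_sf_s with complex coefficients not all zero belongs to X(T,E). -/
open MeasureTheory Filter Topology

/-- A rooted tree: a denumerable vertex set `V`, a level function (distance to the root),
a parent map, such that every level is finite and every vertex has at least two children,
together with a fixed enumeration of the vertices. -/
structure TreeSystem where
  V : Type
  level : V → ℕ
  root : V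
  level_root : level root = 0
  root_unique : ∀ x, level x = 0 → x = root
  parent : V → V
  level_parent : ∀ x, level x ≠ 0 → level (parent x) + 1 = level x
  levels_finite : ∀ n, {x | level x = n}.Finite
  two_children : ∀ x, ∃ y z, y ≠ z ∧ parent y = x ∧ level y = level x + 1 ∧
    parent z = x ∧ level z = level x + 1
  enum : ℕ → V
  enum_bij : Function.Bijective enum

/-- The number of elements of `A ∩ {1, …, N}`. -/
noncomputable def partialCount (A : Set ℕ) (N : ℕ) : ℝ :=
  ∑ n ∈ Finset.Icc 1 N, A.indicator (fun _ => (1 : ℝ)) n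

/-- The lower density of a set of positive integers. -/
noncomputable def lowerDensity (A : Set ℕ) : ℝ :=
  liminf (fun N : ℕ => partialCount A N / N) atTop

/-- The upper density of a set of positive integers. -/
noncomputable def upperDensity (A : Set ℕ) : ℝ :=
  limsup (fun N : ℕ => partialCount A N / N) atTop

/-- The (translation invariant) product metric `d̂` on `E ^ ℕ` built from a metric `d` on `E`;
it induces the product topology. -/
noncomputable def dHat {E : Type} (d : E → E → ℝ) (x y : ℕ → E) : ℝ :=
  ∑' n : ℕ, (1 / 2 : ℝ) ^ (n + 1) * (d (x n) (y n) / (1 + d (x n) (y n)))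

namespace TreeSystem

variable (t : TreeSystem)

/-- The set `S(x)` of children of a vertex `x`. -/
def children (x : t.V) : Set t.V := {y | t.parent y = x ∧ t.level y = t.level x + 1}

/-- The boundary `∂T`: the set of infinite geodesics starting at the root. -/
def Geodesic : Type := {e : ℕ → t.V // e 0 = t.root ∧ ∀ n, e (n + 1) ∈ t.children (e n)}

/-- The boundary sector `B_x` of a vertex `x`. -/
def Bx (x : t.V) : Set t.Geodesic := {e | e.1 (t.level x) = x}

/-- `𝓜ₙ`: the σ-algebra on `∂T` generated by the level-`n` boundary sectors. -/
def Mn (n : ℕ) : MeasurableSpace t.Geodesic :=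
  MeasurableSpace.generateFrom {B | ∃ x, t.level x = n ∧ B = t.Bx x}

/-- The σ-algebra on `∂T` generated by `⋃ n, 𝓜ₙ`.  Its completion `𝓜` with respect to the
measure `ℙ` is realized below via null-measurable sets. -/
instance instMeasurableSpaceGeodesic : MeasurableSpace t.Geodesic := ⨆ n, t.Mn n

/-- `pathProb q n x = ∏_{j=0}^{n-1} q(y_j, y_{j+1})` along the geodesic
`root = y_0, y_1, …, y_n = x` from the root to `x` (for a vertex `x` of level `n`). -/
def pathProb (q : t.V → t.V → ℝ) : ℕ → t.V → ℝ
  | 0, _ => 1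
  | n + 1, x => pathProb q n (t.parent x) * q (t.parent x) x

/-- `h : ∂T → E` is `𝓜`-measurable, `𝓜` being the completion of `⨆ n, 𝓜ₙ` w.r.t. `ℙ`:
preimages of open sets are in the completed σ-algebra. -/
def MMeas {E : Type} [TopologicalSpace E] (ℙ : Measure t.Geodesic)
    (h : t.Geodesic → E) : Prop :=
  ∀ V : Set E, IsOpen V → NullMeasurableSet (h ⁻¹' V) ℙ

/-- The metric `P(ψ,φ) = ∫ d(ψ e, φ e)/(1 + d(ψ e, φ e)) dℙ(e)` of `L⁰(∂T, E)`
(convergence in probability), as a pseudometric on representatives, for a metric `d` on `E`. -/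
noncomputable def L0dist {E : Type} (ℙ : Measure t.Geodesic) (d : E → E → ℝ)
    (ψ φ : t.Geodesic → E) : ℝ :=
  ∫ e, d (ψ e) (φ e) / (1 + d (ψ e) (φ e)) ∂ℙ

/-- Open subsets of `L⁰(∂T, E)`, encoded as sets of `𝓜`-measurable representatives. -/
def IsOpenL0 {E : Type} [TopologicalSpace E] (ℙ : Measure t.Geodesic) (d : E → E → ℝ)
    (V : Set (t.Geodesic → E)) : Prop :=
  (∀ ψ ∈ V, t.MMeas ℙ ψ) ∧
    ∀ ψ ∈ V, ∃ ε > 0, ∀ φ, t.MMeas ℙ φ → t.L0dist ℙ d ψ φ < ε → φ ∈ V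

/-- Dense subsets of `L⁰(∂T, E)`. -/
def DenseL0 {E : Type} [TopologicalSpace E] (ℙ : Measure t.Geodesic) (d : E → E → ℝ)
    (V : Set (t.Geodesic → E)) : Prop :=
  ∀ ψ, t.MMeas ℙ ψ → ∀ ε > 0, ∃ φ ∈ V, t.L0dist ℙ d ψ φ < ε

/-- (Generalized) harmonic functions with respect to the weights `w`:
`f(x) = ∑_{y ∈ S(x)} w(x,y) • f(y)` for every vertex `x`. -/
def Harmonic {E : Type} [AddCommMonoid E] [Module ℂ E] (w : t.V → t.V → ℂ)
    (f : t.V → E) : Prop :=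
  ∀ x, f x = ∑ᶠ y ∈ t.children x, w x y • f y

/-- The boundary values `ωₙ(f)(e) = f(z)`, `z` the unique vertex of `e` at level `n`. -/
def omega {E : Type} (f : t.V → E) (n : ℕ) : t.Geodesic → E := fun e => f (e.1 n)

/-- The metric `ρ` of pointwise convergence on `E^T` (for a metric `d` on `E`),
defined through the fixed enumeration of the vertices. -/
noncomputable def rho {E : Type} (d : E → E → ℝ) (f g : t.V → E) : ℝ :=
  ∑' n : ℕ, (1 / 2 : ℝ) ^ (n + 1) *
    (d (f (t.enum n)) (g (t.enum n)) / (1 + d (f (t.enum n)) (g (t.enum n))))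

/-- A set of functions on `T` is dense in `H(T, E)`. -/
def DenseInH {E : Type} [AddCommMonoid E] [Module ℂ E] (d : E → E → ℝ)
    (w : t.V → t.V → ℂ) (F : Set (t.V → E)) : Prop :=
  ∀ h, t.Harmonic w h → ∀ ε > 0, ∃ f ∈ F, t.rho d f h < ε

/-- Open subsets of `H(T,E)` (w.r.t. the metric `ρ`). -/
def IsOpenH {E : Type} [AddCommMonoid E] [Module ℂ E] (d : E → E → ℝ)
    (w : t.V → t.V → ℂ) (U : Set (t.V → E)) : Prop :=
  (∀ f ∈ U, t.Harmonic w f) ∧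
    ∀ f ∈ U, ∃ ε > 0, ∀ g, t.Harmonic w g → t.rho d f g < ε → g ∈ U

/-- Universal harmonic functions, `f ∈ U(T,E)`: `f` is harmonic and the sequence
`(ωₙ(f))_{n ≥ 1}` is dense in `L⁰(∂T, E)`. -/
def Universal {E : Type} [TopologicalSpace E] [AddCommMonoid E] [Module ℂ E]
    (ℙ : Measure t.Geodesic) (d : E → E → ℝ) (w : t.V → t.V → ℂ)
    (f : t.V → E) : Prop :=
  t.Harmonic w f ∧
    ∀ ψ, t.MMeas ℙ ψ → ∀ ε > 0, ∃ n, 1 ≤ n ∧ t.L0dist ℙ d (t.omega f n) ψ < ε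

/-- Frequently universal harmonic functions, `f ∈ U_FM(T,E)`: for every nonempty open
`V ⊆ L⁰(∂T,E)` the set `{n : ωₙ(f) ∈ V}` has strictly positive lower density. -/
def FreqUniversal {E : Type} [TopologicalSpace E] [AddCommMonoid E] [Module ℂ E]
    (ℙ : Measure t.Geodesic) (d : E → E → ℝ) (w : t.V → t.V → ℂ)
    (f : t.V → E) : Prop :=
  t.Harmonic w f ∧
    ∀ V : Set (t.Geodesic → E), V.Nonempty → t.IsOpenL0 ℙ d V →
      0 < lowerDensity {n | 1 ≤ n ∧ t.omega f n ∈ V}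

/-- The class `X(T,E)`: harmonic `f` such that for every nonempty open `V ⊆ L⁰(∂T,E)`
the set `{n : ωₙ(f) ∈ V}` has upper density one. -/
def ClassX {E : Type} [TopologicalSpace E] [AddCommMonoid E] [Module ℂ E]
    (ℙ : Measure t.Geodesic) (d : E → E → ℝ) (w : t.V → t.V → ℂ)
    (f : t.V → E) : Prop :=
  t.Harmonic w f ∧
    ∀ V : Set (t.Geodesic → E), V.Nonempty → t.IsOpenL0 ℙ d V →
      upperDensity {n | 1 ≤ n ∧ t.omega f n ∈ V} = 1

end TreeSystem

section ClassXAux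

open MeasureTheory Filter Topology

lemma partialCount_nonneg (A : Set ℕ) (N : ℕ) : 0 ≤ partialCount A N :=
  Finset.sum_nonneg fun n _ => Set.indicator_nonneg (fun _ _ => zero_le_one) n

lemma partialCount_le (A : Set ℕ) (N : ℕ) : partialCount A N ≤ N := by
  calc partialCount A N ≤ ∑ n ∈ Finset.Icc 1 N, (1:ℝ) := by
        refine Finset.sum_le_sum fun n _ => ?_
        exact Set.indicator_le' (fun _ _ => le_rfl) (fun _ _ => zero_le_one) n
    _ = N := by simp

lemma partialCount_mono {A B : Set ℕ} (h : A ⊆ B) (N : ℕ) :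
    partialCount A N ≤ partialCount B N :=
  Finset.sum_le_sum fun n _ =>
    Set.indicator_le_indicator_of_subset h (fun _ => zero_le_one) n

lemma ratio_nonneg (A : Set ℕ) (N : ℕ) : 0 ≤ partialCount A N / N :=
  div_nonneg (partialCount_nonneg A N) (Nat.cast_nonneg N)

lemma ratio_le_one (A : Set ℕ) (N : ℕ) : partialCount A N / N ≤ 1 := by
  rcases Nat.eq_zero_or_pos N with h | h
  · subst h; simp
  · rw [div_le_one (by exact_mod_cast h)]; exact partialCount_le A N

lemma upperDensity_le_one (A : Set ℕ) : upperDensity A ≤ 1 := by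
  refine limsup_le_of_le (isCoboundedUnder_le_of_le atTop fun N => ratio_nonneg A N) ?_
  exact Eventually.of_forall fun N => ratio_le_one A N

lemma upperDensity_mono {A B : Set ℕ} (h : A ⊆ B) : upperDensity A ≤ upperDensity B := by
  refine limsup_le_limsup (Eventually.of_forall fun N => ?_)
    (isCoboundedUnder_le_of_le atTop fun N => ratio_nonneg A N)
    ⟨1, Filter.eventually_map.mpr (Eventually.of_forall fun N => ratio_le_one B N)⟩
  rcases Nat.eq_zero_or_pos N with hN | hN
  · subst hN; simp
  · exact div_le_div_of_nonneg_right (partialCount_mono h N) (Nat.cast_nonneg N)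

lemma mfrac_nonneg {x : ℝ} (hx : 0 ≤ x) : 0 ≤ x / (1 + x) :=
  div_nonneg hx (by linarith)

lemma mfrac_le_one {x : ℝ} (hx : 0 ≤ x) : x / (1 + x) ≤ 1 :=
  (div_le_one (by linarith)).mpr (by linarith)

lemma mfrac_le_self {x : ℝ} (hx : 0 ≤ x) : x / (1 + x) ≤ x :=
  div_le_self hx (by linarith)

lemma mfrac_mono {x y : ℝ} (hx : 0 ≤ x) (hxy : x ≤ y) :
    x / (1 + x) ≤ y / (1 + y) := by
  rw [div_le_div_iff₀ (by linarith) (by linarith)]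
  nlinarith

lemma half_le_mfrac {x : ℝ} (hx0 : 0 ≤ x) (hx1 : x ≤ 1) : x / 2 ≤ x / (1 + x) :=
  div_le_div_of_nonneg_left hx0 (by linarith) (by linarith)

lemma summable_geo : Summable (fun n : ℕ => (1/2 : ℝ)^(n+1)) := by
  have h : (fun n : ℕ => (1/2 : ℝ)^(n+1)) = fun n : ℕ => (1/2 : ℝ)^n * (1/2) :=
    funext fun n => pow_succ _ _
  rw [h]
  exact (summable_geometric_of_lt_one (by norm_num) (by norm_num)).mul_right _

lemma tsum_geo : (∑' n : ℕ, (1/2 : ℝ)^(n+1)) = 1 := by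
  rw [show (fun n : ℕ => (1/2 : ℝ)^(n+1)) = fun n => (1/2) * (1/2)^n from funext fun n => by ring,
    tsum_mul_left, tsum_geometric_of_lt_one (by norm_num) (by norm_num)]
  norm_num

variable {E : Type} [PseudoMetricSpace E]

lemma dHat_summable (x y : ℕ → E) :
    Summable (fun n => (1/2 : ℝ)^(n+1) * (dist (x n) (y n) / (1 + dist (x n) (y n)))) := by
  refine Summable.of_nonneg_of_le (fun n => by positivity) (fun n => ?_) summable_geo
  exact mul_le_of_le_one_right (by positivity) (mfrac_le_one dist_nonneg)

lemma dHat_nonneg (x y : ℕ → E) : 0 ≤ dHat dist x y :=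
  tsum_nonneg fun n => by positivity

lemma dHat_le_one (x y : ℕ → E) : dHat dist x y ≤ 1 := by
  rw [← tsum_geo]
  refine Summable.tsum_le_tsum (fun n => ?_) (dHat_summable x y) summable_geo
  exact mul_le_of_le_one_right (by positivity) (mfrac_le_one dist_nonneg)

lemma le_dHat (x y : ℕ → E) (i : ℕ) :
    (1/2 : ℝ)^(i+1) * (dist (x i) (y i) / (1 + dist (x i) (y i))) ≤ dHat dist x y :=
  Summable.le_tsum (dHat_summable x y) i (fun j _ => by positivity)

lemma dHat_continuous :
    Continuous (fun p : (ℕ → E) × (ℕ → E) => dHat dist p.1 p.2) := by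
  unfold dHat
  refine continuous_tsum (u := fun n : ℕ => (1/2 : ℝ)^(n+1)) (fun n => ?_) summable_geo
    (fun n p => ?_)
  · have hd : Continuous fun p : (ℕ → E) × (ℕ → E) => dist (p.1 n) (p.2 n) :=
      Continuous.dist ((continuous_apply n).comp continuous_fst)
        ((continuous_apply n).comp continuous_snd)
    exact continuous_const.mul (hd.div (continuous_const.add hd)
      (fun p => by positivity))
  · rw [Real.norm_eq_abs, abs_of_nonneg (by positivity)]
    exact mul_le_of_le_one_right (by positivity) (mfrac_le_one dist_nonneg)

lemma mmeas_aemeasurable' {α β : Type} [MeasurableSpace α] {μ : Measure α}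
    [TopologicalSpace β] [SecondCountableTopology β] [mβ : MeasurableSpace β] [BorelSpace β]
    {χ : α → β}
    (h : ∀ V : Set β, IsOpen V → NullMeasurableSet (χ ⁻¹' V) μ) : AEMeasurable χ μ := by
  have hnm : NullMeasurable χ μ := by
    intro s hs
    rw [BorelSpace.measurable_eq (α := β)] at hs
    exact (@measurable_generateFrom (NullMeasurableSpace α μ) β
      (inferInstance) {V : Set β | IsOpen V} χ (fun u hu => h u hu)) hs
  exact hnm.aemeasurable

end ClassXAux

set_option maxHeartbeats 2000000 in
open MeasureTheory Filter Topology in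
lemma classX_key (t : TreeSystem)
    {E : Type} [NormedAddCommGroup E] [NormedSpace ℂ E] [TopologicalSpace.SeparableSpace E]
    (w : t.V → t.V → ℂ)
    (ℙ : MeasureTheory.Measure t.Geodesic) [MeasureTheory.IsProbabilityMeasure ℙ]
    (fs : ℕ → t.V → E)
    (hf : t.ClassX ℙ (dHat dist) w (fun x => fun n => fs n x))
    (s : ℕ) (a : ℕ → ℂ) (ha : ∃ i < s, a i ≠ 0) :
    t.ClassX ℙ dist w (fun x => ∑ i ∈ Finset.range s, a i • fs i x) := by
  haveI : SecondCountableTopology E := UniformSpace.secondCountable_of_separable E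
  letI : MeasurableSpace (ℕ → E) := borel (ℕ → E)
  haveI : BorelSpace (ℕ → E) := ⟨rfl⟩
  obtain ⟨i₀, hi₀s, hai₀⟩ := ha
  set Φ : (ℕ → E) → E := fun v => ∑ i ∈ Finset.range s, a i • v i with hΦ
  set C : ℝ := ∑ i ∈ Finset.range s, ‖a i‖ with hC
  have hCpos : 0 < C := by
    refine Finset.sum_pos' (fun i _ => norm_nonneg _) ⟨i₀, Finset.mem_range.mpr hi₀s, ?_⟩
    simpa using hai₀
  have hΦcont : Continuous Φ := continuous_finset_sum _ fun i _ =>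
    (continuous_apply i).const_smul (a i)
  have hfin : ∀ x, (t.children x).Finite := fun x =>
    (t.levels_finite (t.level x + 1)).subset fun y hy => hy.2
  have hcomp : ∀ i x, fs i x = ∑ y ∈ (hfin x).toFinset, w x y • fs i y := by
    intro i x
    have h1 := hf.1 x
    rw [← Set.Finite.coe_toFinset (hfin x), finsum_mem_coe_finset] at h1
    have h2 := congrFun h1 i
    simpa using h2
  constructor
  · intro x
    rw [← Set.Finite.coe_toFinset (hfin x), finsum_mem_coe_finset]
    show ∑ i ∈ Finset.range s, a i • fs i x
        = ∑ y ∈ (hfin x).toFinset, w x y • ∑ i ∈ Finset.range s, a i • fs i y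
    calc ∑ i ∈ Finset.range s, a i • fs i x
        = ∑ i ∈ Finset.range s, ∑ y ∈ (hfin x).toFinset, a i • (w x y • fs i y) := by
          refine Finset.sum_congr rfl fun i _ => ?_
          rw [hcomp i x, Finset.smul_sum]
      _ = ∑ y ∈ (hfin x).toFinset, ∑ i ∈ Finset.range s, w x y • (a i • fs i y) := by
          rw [Finset.sum_comm]
          exact Finset.sum_congr rfl fun y _ =>
            Finset.sum_congr rfl fun i _ => smul_comm _ _ _
      _ = ∑ y ∈ (hfin x).toFinset, w x y • ∑ i ∈ Finset.range s, a i • fs i y :=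
          Finset.sum_congr rfl fun y _ => (Finset.smul_sum).symm
  · intro V hVne hVopen
    have hΦbound : ∀ (x y : ℕ → E) (η : ℝ), (∀ i < s, dist (x i) (y i) ≤ η) →
        dist (Φ x) (Φ y) ≤ C * η := by
      intro x y η hxy
      rw [dist_eq_norm]
      have hsub : Φ x - Φ y = ∑ i ∈ Finset.range s, a i • (x i - y i) := by
        simp only [hΦ, ← Finset.sum_sub_distrib]
        exact Finset.sum_congr rfl fun i _ => (smul_sub _ _ _).symm
      rw [hsub]
      calc ‖∑ i ∈ Finset.range s, a i • (x i - y i)‖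
          ≤ ∑ i ∈ Finset.range s, ‖a i • (x i - y i)‖ := norm_sum_le _ _
        _ ≤ ∑ i ∈ Finset.range s, ‖a i‖ * η := by
            refine Finset.sum_le_sum fun i hi => ?_
            rw [norm_smul]
            refine mul_le_mul_of_nonneg_left ?_ (norm_nonneg _)
            rw [← dist_eq_norm]
            exact hxy i (Finset.mem_range.mp hi)
        _ = C * η := by rw [← Finset.sum_mul]
    have hA : ∀ φ : t.Geodesic → (ℕ → E), t.MMeas ℙ φ → t.MMeas ℙ (fun e => Φ (φ e)) := by
      intro φ hφ U hU
      exact hφ _ (hU.preimage hΦcont)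
    have hB : ∀ ε > (0:ℝ), ∃ δ > (0:ℝ), ∀ ψ φ : t.Geodesic → (ℕ → E),
        t.MMeas ℙ ψ → t.MMeas ℙ φ → t.L0dist ℙ (dHat dist) ψ φ < δ →
        t.L0dist ℙ dist (fun e => Φ (ψ e)) (fun e => Φ (φ e)) < ε := by
      intro ε hε
      set η : ℝ := ε / 4 / C with hηdef
      have hηpos : 0 < η := div_pos (by linarith) hCpos
      set α : ℝ := (1/2 : ℝ)^(s+2) * (η / (1 + η)) with hαdef
      have hαpos : 0 < α := mul_pos (by positivity) (div_pos hηpos (by linarith))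
      refine ⟨α * (ε/4), by positivity, fun ψ φ hψ hφ hdist => ?_⟩
      set h : t.Geodesic → ℝ :=
        fun e => dHat dist (ψ e) (φ e) / (1 + dHat dist (ψ e) (φ e)) with hhdef
      have hnn : ∀ e, 0 ≤ h e := fun e => mfrac_nonneg (dHat_nonneg _ _)
      have hmeas : AEMeasurable h ℙ := by
        have hpair : AEMeasurable (fun e => (ψ e, φ e)) ℙ :=
          (mmeas_aemeasurable' hψ).prodMk (mmeas_aemeasurable' hφ)
        have hH : Continuous (fun p : (ℕ → E) × (ℕ → E) =>
            dHat dist p.1 p.2 / (1 + dHat dist p.1 p.2)) := by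
          refine dHat_continuous.div (continuous_const.add dHat_continuous) fun p => ?_
          have := dHat_nonneg p.1 p.2
          positivity
        exact hH.measurable.comp_aemeasurable hpair
      have hint : Integrable h ℙ := by
        refine Integrable.mono' (integrable_const 1) hmeas.aestronglyMeasurable
          (Filter.Eventually.of_forall fun e => ?_)
        rw [Real.norm_eq_abs, abs_of_nonneg (hnn e)]
        exact mfrac_le_one (dHat_nonneg _ _)
      have hpt : ∀ e, dist (Φ (ψ e)) (Φ (φ e)) / (1 + dist (Φ (ψ e)) (Φ (φ e)))
          ≤ ε/4 + h e / α := by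
        intro e
        by_cases hc : ∀ i < s, dist (ψ e i) (φ e i) ≤ η
        · have h1 : dist (Φ (ψ e)) (Φ (φ e)) ≤ ε/4 := by
            have hb := hΦbound (ψ e) (φ e) η hc
            have hCe : C * η = ε/4 := by
              rw [hηdef, mul_comm, div_mul_cancel₀ _ hCpos.ne']
            linarith
          have h2 := mfrac_le_self (dist_nonneg (x := Φ (ψ e)) (y := Φ (φ e)))
          have h3 : 0 ≤ h e / α := div_nonneg (hnn e) hαpos.le
          linarith
        · push_neg at hc
          obtain ⟨i, his, hgt⟩ := hc
          have h1 := le_dHat (ψ e) (φ e) i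
          have h2 : (1/2 : ℝ)^(s+1) * (η / (1 + η)) ≤
              (1/2 : ℝ)^(i+1) * (dist (ψ e i) (φ e i) / (1 + dist (ψ e i) (φ e i))) := by
            refine mul_le_mul (pow_le_pow_of_le_one (by norm_num) (by norm_num) (by omega))
              (mfrac_mono hηpos.le hgt.le) ?_ (by positivity)
            exact div_nonneg hηpos.le (by linarith)
          have hd1 := dHat_le_one (ψ e) (φ e)
          have hd0 := dHat_nonneg (ψ e) (φ e)
          have h4 := half_le_mfrac hd0 hd1
          have h5 : α ≤ h e := by
            rw [hαdef]
            have hrw : (1/2 : ℝ)^(s+2) * (η/(1+η)) = ((1/2 : ℝ)^(s+1) * (η/(1+η)))/2 := by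
              ring
            rw [hrw]
            calc ((1/2:ℝ)^(s+1) * (η/(1+η)))/2 ≤ dHat dist (ψ e) (φ e) / 2 := by linarith
              _ ≤ h e := h4
          have h6 : (1:ℝ) ≤ h e / α := (one_le_div hαpos).mpr h5
          have h7 := mfrac_le_one (dist_nonneg (x := Φ (ψ e)) (y := Φ (φ e)))
          linarith
      have hL0 : t.L0dist ℙ (dHat dist) ψ φ = ∫ e, h e ∂ℙ := rfl
      have hL0' : t.L0dist ℙ dist (fun e => Φ (ψ e)) (fun e => Φ (φ e))
          = ∫ e, dist (Φ (ψ e)) (Φ (φ e)) / (1 + dist (Φ (ψ e)) (Φ (φ e))) ∂ℙ := rfl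
      have hcalc : (∫ e, dist (Φ (ψ e)) (Φ (φ e)) / (1 + dist (Φ (ψ e)) (Φ (φ e))) ∂ℙ)
          ≤ ∫ e, (ε/4 + h e / α) ∂ℙ :=
        integral_mono_of_nonneg
          (Filter.Eventually.of_forall fun e => mfrac_nonneg dist_nonneg)
          ((integrable_const _).add (hint.div_const α))
          (Filter.Eventually.of_forall hpt)
      have heq : (∫ e, (ε/4 + h e / α) ∂ℙ) = ε/4 + (∫ e, h e ∂ℙ) / α := by
        rw [integral_add (integrable_const _) (hint.div_const α), integral_const,
          integral_div]
        simp
      have hlt : (∫ e, h e ∂ℙ) / α < ε/4 := by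
        rw [div_lt_iff₀ hαpos]
        calc (∫ e, h e ∂ℙ) = t.L0dist ℙ (dHat dist) ψ φ := hL0.symm
          _ < α * (ε/4) := hdist
          _ = ε/4 * α := by ring
      rw [hL0']
      calc (∫ e, dist (Φ (ψ e)) (Φ (φ e)) / (1 + dist (Φ (ψ e)) (Φ (φ e))) ∂ℙ)
          ≤ ε/4 + (∫ e, h e ∂ℙ)/α := heq ▸ hcalc
        _ < ε/4 + ε/4 := by linarith
        _ ≤ ε := by linarith
    obtain ⟨φ₀, hφ₀⟩ := hVne
    have hφ₀M := hVopen.1 φ₀ hφ₀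
    set V' : Set (t.Geodesic → (ℕ → E)) :=
      {ψ | t.MMeas ℙ ψ ∧ (fun e => Φ (ψ e)) ∈ V} with hV'
    have hL : Continuous (fun v : E => fun n : ℕ => if n = i₀ then (a i₀)⁻¹ • v else 0) := by
      refine continuous_pi fun n => ?_
      by_cases hn : n = i₀
      · simp only [if_pos hn]
        exact continuous_id.const_smul _
      · simp only [if_neg hn]
        exact continuous_const
    set ψ₀ : t.Geodesic → (ℕ → E) :=
      fun e => fun n => if n = i₀ then (a i₀)⁻¹ • φ₀ e else 0 with hψ₀
    have hψ₀M : t.MMeas ℙ ψ₀ := fun U hU => hφ₀M _ (hU.preimage hL)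
    have hΦψ₀ : (fun e => Φ (ψ₀ e)) = φ₀ := by
      funext e
      simp only [hΦ, hψ₀]
      calc ∑ i ∈ Finset.range s, a i • (if i = i₀ then (a i₀)⁻¹ • φ₀ e else 0)
          = ∑ i ∈ Finset.range s, (if i = i₀ then a i • (a i₀)⁻¹ • φ₀ e else 0) := by
            refine Finset.sum_congr rfl fun i _ => ?_
            split_ifs <;> simp
        _ = a i₀ • (a i₀)⁻¹ • φ₀ e := by
            rw [Finset.sum_ite_eq' (Finset.range s) i₀]
            rw [if_pos (Finset.mem_range.mpr hi₀s)]
        _ = φ₀ e := by rw [smul_smul, mul_inv_cancel₀ hai₀, one_smul]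
    have hV'ne : V'.Nonempty := ⟨ψ₀, hψ₀M, hΦψ₀ ▸ hφ₀⟩
    have hV'open : t.IsOpenL0 ℙ (dHat dist) V' := by
      refine ⟨fun ψ hψ => hψ.1, fun ψ hψ => ?_⟩
      obtain ⟨ε₀, hε₀, hball⟩ := hVopen.2 _ hψ.2
      obtain ⟨δ, hδ, hBB⟩ := hB ε₀ hε₀
      exact ⟨δ, hδ, fun φ hφM hd => ⟨hφM, hball _ (hA φ hφM) (hBB ψ φ hψ.1 hφM hd)⟩⟩
    have hdens := hf.2 V' hV'ne hV'open
    refine le_antisymm (upperDensity_le_one _) ?_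
    rw [← hdens]
    refine upperDensity_mono fun n hn => ?_
    exact ⟨hn.1, hn.2.2⟩

/-- If `f = (f₁, f₂, …) ∈ X(T, E^ℕ)` (where `E^ℕ` carries the product
metric `d̂`), then `Span{fₙ : n ∈ ℕ} ⊆ X(T,E) ∪ {0}`; in fact every finite linear
combination of the `fₙ` with complex coefficients not all zero belongs to `X(T,E)`. -/
theorem classX_span (t : TreeSystem)
    {E : Type} [NormedAddCommGroup E] [NormedSpace ℂ E] [TopologicalSpace.SeparableSpace E]
    (q : t.V → t.V → ℝ)
    (hq_pos : ∀ x, ∀ y ∈ t.children x, 0 < q x y)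
    (hq_sum : ∀ x, ∑ᶠ y ∈ t.children x, q x y = 1)
    (w : t.V → t.V → ℂ)
    (hw_ne : ∀ x, ∀ y ∈ t.children x, w x y ≠ 0)
    (hw_sum : ∀ x, ∑ᶠ y ∈ t.children x, w x y = 1)
    (ℙ : MeasureTheory.Measure t.Geodesic) [MeasureTheory.IsProbabilityMeasure ℙ]
    (hℙ : ∀ x, ℙ (t.Bx x) = ENNReal.ofReal (t.pathProb q (t.level x) x))
    (fs : ℕ → t.V → E)
    (hf : t.ClassX ℙ (dHat dist) w (fun x => fun n => fs n x)) :
    ((Submodule.span ℂ (Set.range fs) : Submodule ℂ (t.V → E)) : Set (t.V → E)) ⊆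
        {g | t.ClassX ℙ dist w g} ∪ {0} ∧
      ∀ (s : ℕ) (a : ℕ → ℂ), (∃ i < s, a i ≠ 0) →
        t.ClassX ℙ dist w (fun x => ∑ i ∈ Finset.range s, a i • fs i x) := by
  have key : ∀ (s : ℕ) (a : ℕ → ℂ), (∃ i < s, a i ≠ 0) →
      t.ClassX ℙ dist w (fun x => ∑ i ∈ Finset.range s, a i • fs i x) :=
    fun s a ha => classX_key t w ℙ fs hf s a ha
  refine ⟨?_, key⟩
  intro g hg
  by_cases hg0 : g = 0
  · right; exact hg0
  · left
    rw [SetLike.mem_coe, Finsupp.mem_span_range_iff_exists_finsupp] at hg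
    obtain ⟨c, hc⟩ := hg
    set s := (c.support.sup id) + 1 with hs
    have hsub : c.support ⊆ Finset.range s := fun i hi =>
      Finset.mem_range.mpr (Nat.lt_succ_of_le (Finset.le_sup (f := id) hi))
    have hrepr : ∑ i ∈ Finset.range s, c i • fs i = g := by
      rw [← hc]
      exact (Finsupp.sum_of_support_subset c hsub (fun i aa => aa • fs i)
        (fun i _ => zero_smul ℂ (fs i))).symm
    have hgx : g = fun x => ∑ i ∈ Finset.range s, c i • fs i x := by
      funext x
      rw [← hrepr]
      simp [Finset.sum_apply]
    have hex : ∃ i < s, c i ≠ 0 := by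
      by_contra hno
      push_neg at hno
      apply hg0
      rw [hgx]
      funext x
      simp only [Pi.zero_apply]
      exact Finset.sum_eq_zero fun i hi => by
        rw [hno i (Finset.mem_range.mp hi), zero_smul]
    show t.ClassX ℙ dist w g
    rw [hgx]
    exact key s (fun i => c i) hex
end

section
/- For every harmonic function h ∈ H(T,E) and every ε > 0 there exist N ∈ ℕ and a harmonic function g ∈ H(T,E) such that ρ(h,g) < ε and g(x) = g(x⁻) for every vertex x ∈ T_k with k > N, where x⁻ denotes the parent of x; consequently ω_k(g) = ω_N(g) for all k > N. In other words, the harmonic functions that are eventually constant along every geodesic are dense in H(T,E). -/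
open MeasureTheory Filter Topology

/-- Harmonic functions that are eventually constant along every geodesic
are dense in `H(T,E)`: for every harmonic `h` and `ε > 0` there are `N ∈ ℕ` and a harmonic
`g` with `ρ(h,g) < ε` and `g(x) = g(x⁻)` for every vertex `x` of level `> N`; consequently
`ω_k(g) = ω_N(g)` for all `k > N`. -/
theorem eventually_constant_harmonic_dense (t : TreeSystem)
    {E : Type} [MetricSpace E] [AddCommGroup E] [Module ℂ E]
    [IsTopologicalAddGroup E] [ContinuousSMul ℂ E] [TopologicalSpace.SeparableSpace E]
    (w : t.V → t.V → ℂ)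
    (hw_ne : ∀ x, ∀ y ∈ t.children x, w x y ≠ 0)
    (hw_sum : ∀ x, ∑ᶠ y ∈ t.children x, w x y = 1)
    (h : t.V → E) (hh : t.Harmonic w h) (ε : ℝ) (hε : 0 < ε) :
    ∃ (N : ℕ) (g : t.V → E), t.Harmonic w g ∧ t.rho dist h g < ε ∧
      (∀ x, N < t.level x → g x = g (t.parent x)) ∧
      ∀ k, N < k → ∀ e : t.Geodesic, t.omega g k e = t.omega g N e := by

  classical
  obtain ⟨M, hM⟩ : ∃ M : ℕ, (1/2 : ℝ)^M < ε :=
    exists_pow_lt_of_lt_one hε (by norm_num)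
  set N := (Finset.range M).sup (fun n => t.level (t.enum n)) with hN
  set g : t.V → E := fun x => h (t.parent^[t.level x - N] x) with hg
  have hgx : ∀ x, t.level x ≤ N → g x = h x := by
    intro x hx; simp [hg, Nat.sub_eq_zero_of_le hx]
  have hpar : ∀ x, N < t.level x → g x = g (t.parent x) := by
    intro x hx
    have hl : t.level (t.parent x) + 1 = t.level x := t.level_parent x (by omega)
    have he : t.level x - N = (t.level (t.parent x) - N) + 1 := by omega
    simp only [hg, he, Function.iterate_succ_apply]
  have hcfin : ∀ x : t.V, (t.children x).Finite :=
    fun x => (t.levels_finite (t.level x + 1)).subset (fun y hy => hy.2)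
  have hfs : ∀ (x : t.V) (F : t.V → E),
      ∑ᶠ y ∈ t.children x, F y = ∑ y ∈ (hcfin x).toFinset, F y := by
    intro x F
    exact finsum_mem_eq_finite_toFinset_sum F (hcfin x)
  have hfsC : ∀ (x : t.V) (F : t.V → ℂ),
      ∑ᶠ y ∈ t.children x, F y = ∑ y ∈ (hcfin x).toFinset, F y := by
    intro x F
    exact finsum_mem_eq_finite_toFinset_sum F (hcfin x)
  have hharm : t.Harmonic w g := by
    intro x
    by_cases hx : t.level x < N
    · rw [hgx x hx.le, hh x]
      refine finsum_mem_congr rfl (fun y hy => ?_)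
      rw [hgx y (by have := hy.2; omega)]
    · push_neg at hx
      have hgy : ∀ y ∈ t.children x, g y = g x := by
        intro y hy
        have hy2 : g y = g (t.parent y) := hpar y (by rw [hy.2]; omega)
        rw [hy2, hy.1]
      calc g x = (∑ᶠ y ∈ t.children x, w x y) • g x := by rw [hw_sum x, one_smul]
        _ = ∑ᶠ y ∈ t.children x, w x y • g x := by
              rw [hfsC, hfs, Finset.sum_smul]
        _ = ∑ᶠ y ∈ t.children x, w x y • g y :=
              finsum_mem_congr rfl (fun y hy => by rw [hgy y hy])
  -- the distance estimate
  set a : ℕ → ℝ := fun n => (1 / 2 : ℝ) ^ (n + 1) *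
    (dist (h (t.enum n)) (g (t.enum n)) / (1 + dist (h (t.enum n)) (g (t.enum n)))) with ha
  have hanneg : ∀ n, 0 ≤ a n := by
    intro n
    have h1 : (0:ℝ) ≤ dist (h (t.enum n)) (g (t.enum n)) := dist_nonneg
    positivity
  have hale : ∀ n, a n ≤ (1/2:ℝ)^(n+1) := by
    intro n
    have h1 : (0:ℝ) ≤ dist (h (t.enum n)) (g (t.enum n)) := dist_nonneg
    have h2 : dist (h (t.enum n)) (g (t.enum n)) / (1 + dist (h (t.enum n)) (g (t.enum n))) ≤ 1 := by
      rw [div_le_one (by linarith)]; linarith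
    calc a n ≤ (1/2:ℝ)^(n+1) * 1 := by
          apply mul_le_mul_of_nonneg_left h2 (by positivity)
      _ = (1/2:ℝ)^(n+1) := mul_one _
  have hbsum : Summable (fun n : ℕ => (1/2:ℝ)^(n+1)) := by
    simpa [pow_succ] using summable_geometric_two.mul_right (1/2 : ℝ)
  have hasum : Summable a := Summable.of_nonneg_of_le hanneg hale hbsum
  have hzero : ∀ n < M, a n = 0 := by
    intro n hn
    have hlev : t.level (t.enum n) ≤ N :=
      Finset.le_sup (f := fun n => t.level (t.enum n)) (Finset.mem_range.2 hn)
    rw [ha]; simp [hgx _ hlev]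
  have hrho : t.rho dist h g < ε := by
    have key : t.rho dist h g = ∑' n : ℕ, a (n + M) := by
      rw [TreeSystem.rho, ← Summable.sum_add_tsum_nat_add M hasum]
      have : ∑ i ∈ Finset.range M, a i = 0 :=
        Finset.sum_eq_zero (fun i hi => hzero i (Finset.mem_range.1 hi))
      rw [this, zero_add]
    have hle : ∑' n : ℕ, a (n + M) ≤ ∑' n : ℕ, (1/2:ℝ)^(n + M + 1) := by
      refine Summable.tsum_le_tsum (fun n => hale (n + M)) ((summable_nat_add_iff M).2 hasum) ?_
      simpa using (summable_nat_add_iff M).2 hbsum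
    have hgeo : ∑' n : ℕ, (1/2:ℝ)^(n + M + 1) = (1/2:ℝ)^M := by
      have : ∀ n : ℕ, (1/2:ℝ)^(n + M + 1) = (1/2:ℝ)^n * (1/2:ℝ)^(M+1) := by
        intro n; rw [← pow_add]; ring_nf
      rw [tsum_congr this, tsum_mul_right, tsum_geometric_two, pow_succ]
      ring
    rw [key]
    calc ∑' n : ℕ, a (n + M) ≤ (1/2:ℝ)^M := by rw [← hgeo]; exact hle
      _ < ε := hM
  -- level of geodesic points
  have hlevg : ∀ (e : t.Geodesic) (n : ℕ), t.level (e.1 n) = n := by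
    intro e n
    induction n with
    | zero => rw [e.2.1, t.level_root]
    | succ n ih => rw [(e.2.2 n).2, ih]
  refine ⟨N, g, hharm, hrho, (fun x hx => hpar x hx), ?_⟩
  intro k hk e
  show g (e.1 k) = g (e.1 N)
  have : ∀ k, N + 1 ≤ k → g (e.1 k) = g (e.1 N) := by
    intro k hk
    induction k, hk using Nat.le_induction with
    | base =>
        rw [show g (e.1 (N+1)) = g (t.parent (e.1 (N+1))) from
          hpar _ (by rw [hlevg e]; omega), (e.2.2 N).1]
    | succ k hk ih =>
        rw [show g (e.1 (k+1)) = g (t.parent (e.1 (k+1))) from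
          hpar _ (by rw [hlevg e]; omega), (e.2.2 k).1, ih]
  exact this k hk
end
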